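/- Let F be a field and ψ₀ : F → ℂˣ a nontrivial additive character (ψ₀(x+y) = ψ₀(x)ψ₀(y) and ψ₀ is not identically 1). For n ≥ 1 let U_n(F) ≤ GL_n(F) be the group of upper triangular matrices with all diagonal entries 1, and define ψ_n : U_n(F) → ℂˣ by ψ_n(u) = ψ₀(u_{1,2} + u_{2,3} + ⋯ + u_{n−1,n}). Say that a subgroup H of GL_n(F) is disjoint from (U_n, ψ_n) if for every g ∈ GL_n(F) the restriction of ψ_n to U_n(F) ∩ gHg⁻¹ is not identically 1. Theorem: let m, k ≥ 1 and let H be a subgroup of GL_k(F) that is disjoint from (U_k, ψ_k). Then the subgroup H_m = { [[I_m, X],[0, h]] : h ∈ H, X an arbitrary m×k matrix over F } of GL_{m+k}(F) is disjoint from (U_{m+k}, ψ_{m+k}). -/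

import Mathlib

open scoped MatrixGroups Matrix

namespace Stmt0

variable {F : Type*} [Field F]

/-- A matrix is upper triangular unipotent: zeros below the diagonal, ones on the diagonal. -/
def IsUniUpper {n : ℕ} (u : Matrix (Fin n) (Fin n) F) : Prop :=
  (∀ i j : Fin n, (j : ℕ) < (i : ℕ) → u i j = 0) ∧ (∀ i, u i i = 1)

/-- The generic character `ψ_n(u) = ψ₀(u_{1,2} + u_{2,3} + ⋯ + u_{n-1,n})` of `U_n(F)`
(given here by the same formula on all matrices). -/
def psiN (ψ₀ : F → ℂˣ) {n : ℕ} (u : Matrix (Fin n) (Fin n) F) : ℂˣ :=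
  ψ₀ (∑ i : Fin n, ∑ j : Fin n, if (j : ℕ) = (i : ℕ) + 1 then u i j else 0)

/-- A set `H` of invertible `n × n` matrices is disjoint from `(U_n, ψ_n)` if for every
`g ∈ GL_n(F)` the restriction of `ψ_n` to `U_n(F) ∩ g H g⁻¹` is not identically `1`,
i.e. there is an upper triangular unipotent `u` with `g⁻¹ u g ∈ H` and `ψ_n(u) ≠ 1`. -/
def DisjointFromWhittaker (ψ₀ : F → ℂˣ) {n : ℕ} (H : Set (GL (Fin n) F)) : Prop :=
  ∀ g : GL (Fin n) F, ∃ u : GL (Fin n) F,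
    IsUniUpper u.val ∧ g⁻¹ * u * g ∈ H ∧ psiN ψ₀ u.val ≠ 1

/-!
Clearing the first column above its lowest nonzero entry and recursing on a minor gives a Bruhat
decomposition `u₀ g = N`, with `u₀` upper unitriangular and `N` a row permutation of an invertible
upper triangular matrix `T`. As `ψ` is a class function on upper unitriangular matrices, it suffices
to find an upper unitriangular `u` with `ψ(u) ≠ 1` and `N⁻¹ u N ∈ H_m`. Now `N⁻¹ u N = T⁻¹ u' T`, where `u'` is `u`
with rows and columns permuted, and conjugation by `T`, which is block upper triangular, maps
`[[1, X], [0, w]]` to `[[1, X'], [0, B⁻¹ w B]]`, `B` the lower right block of `T`.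

If a position `p` of the first block is followed by a position `p + 1` of the second one, then
`u = 1 + c E_{p,p+1}` with `ψ₀(c) ≠ 1` works, with `w = 1`. Otherwise the second block sits at the
positions `0, …, k - 1`, and a witness `v` of the disjointness of `H` at `B` (with its rows permuted
accordingly), placed in the upper left corner, works.
-/

open Matrix

section UpperTriangular

variable {ι R : Type*} [Fintype ι] [LinearOrder ι] [LocallyFiniteOrder ι]
  [NonUnitalNonAssocSemiring R] {a b : Matrix ι ι R}

lemma mul_apply_eq_sum_Icc (ha : a.IsUpperTriangular) (hb : b.IsUpperTriangular) (i j : ι) :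
    (a * b) i j = ∑ l ∈ Finset.Icc i j, a i l * b l j := by
  rw [mul_apply]
  refine (Finset.sum_subset (Finset.subset_univ _) fun l _ hl => ?_).symm
  rw [Finset.mem_Icc, not_and_or, not_le, not_le] at hl
  rcases hl with h | h
  · rw [ha h, zero_mul]
  · rw [hb h, mul_zero]

lemma mul_apply_self_of_isUpperTriangular (ha : a.IsUpperTriangular) (hb : b.IsUpperTriangular)
    (i : ι) : (a * b) i i = a i i * b i i := by
  rw [mul_apply_eq_sum_Icc ha hb, Finset.Icc_self, Finset.sum_singleton]

end UpperTriangular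

section UniUpper

variable {n : ℕ} {a b u : Matrix (Fin n) (Fin n) F}

lemma IsUniUpper.isUpperTriangular (h : IsUniUpper u) : u.IsUpperTriangular :=
  fun i j hij => h.1 i j hij

lemma isUniUpper_one : IsUniUpper (1 : Matrix (Fin n) (Fin n) F) :=
  ⟨fun _ _ hij => one_apply_ne (Fin.ne_of_gt hij), one_apply_eq⟩

lemma IsUniUpper.mul (ha : IsUniUpper a) (hb : IsUniUpper b) : IsUniUpper (a * b) :=
  ⟨fun _ _ hij => ha.isUpperTriangular.mul hb.isUpperTriangular hij, fun i => by
    rw [mul_apply_self_of_isUpperTriangular ha.isUpperTriangular hb.isUpperTriangular, ha.2,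
      hb.2, one_mul]⟩

lemma IsUniUpper.det_eq_one (h : IsUniUpper u) : u.det = 1 := by
  simp [det_of_isUpperTriangular h.isUpperTriangular, h.2]

lemma IsUniUpper.isUnit_det (h : IsUniUpper u) : IsUnit u.det := by
  simp [h.det_eq_one]

lemma IsUniUpper.isUnit (h : IsUniUpper u) : IsUnit u :=
  (isUnit_iff_isUnit_det u).2 h.isUnit_det

lemma IsUniUpper.inv (h : IsUniUpper u) : IsUniUpper u⁻¹ := by
  have := u.invertibleOfIsUnitDet h.isUnit_det
  have ht : u⁻¹.IsUpperTriangular := blockTriangular_inv_of_blockTriangular h.isUpperTriangular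
  refine ⟨fun _ _ hij => ht hij, fun i => ?_⟩
  have hii := congrFun (congrFun (inv_mul_of_invertible u) i) i
  rwa [mul_apply_self_of_isUpperTriangular ht h.isUpperTriangular, h.2, mul_one,
    one_apply_eq] at hii

lemma isUniUpper_one_add_single {p q : Fin n} (hpq : p < q) (c : F) :
    IsUniUpper (1 + single p q c) :=
  ⟨fun i j hij => by simp [single_apply, one_apply_ne (Fin.ne_of_gt hij)]; omega,
    fun i => by simp [single_apply]; omega⟩

end UniUpper

section SuperdiagSum

variable {n : ℕ} {a b u : Matrix (Fin n) (Fin n) F}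

def superdiagSum (M : Matrix (Fin n) (Fin n) F) : F :=
  ∑ i : Fin n, ∑ j : Fin n, if (j : ℕ) = (i : ℕ) + 1 then M i j else 0

lemma psiN_eq_superdiagSum (ψ₀ : F → ℂˣ) (M : Matrix (Fin n) (Fin n) F) :
    psiN ψ₀ M = ψ₀ (superdiagSum M) := rfl

lemma mul_apply_of_val_eq_succ (ha : a.IsUpperTriangular) (hb : b.IsUpperTriangular)
    {i j : Fin n} (hij : (j : ℕ) = i + 1) : (a * b) i j = a i i * b i j + a i j * b j j := by
  have hIcc : Finset.Icc i j = {i, j} := by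
    ext l
    simp only [Finset.mem_Icc, Finset.mem_insert, Finset.mem_singleton, Fin.le_def, Fin.ext_iff]
    omega
  rw [mul_apply_eq_sum_Icc ha hb, hIcc, Finset.sum_pair (by rintro rfl; omega)]

lemma superdiagSum_mul (ha : IsUniUpper a) (hb : IsUniUpper b) :
    superdiagSum (a * b) = superdiagSum a + superdiagSum b := by
  simp only [superdiagSum, ← Finset.sum_add_distrib]
  refine Finset.sum_congr rfl fun i _ => Finset.sum_congr rfl fun j _ => ?_
  split_ifs with hij
  · rw [mul_apply_of_val_eq_succ ha.isUpperTriangular hb.isUpperTriangular hij, ha.2, hb.2,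
      one_mul, mul_one, add_comm]
  · rw [add_zero]

lemma superdiagSum_one : superdiagSum (1 : Matrix (Fin n) (Fin n) F) = 0 := by
  simpa using superdiagSum_mul (isUniUpper_one (n := n) (F := F)) isUniUpper_one

lemma superdiagSum_inv_mul_mul (hu : IsUniUpper u) (ha : IsUniUpper a) :
    superdiagSum (u⁻¹ * a * u) = superdiagSum a := by
  have hinv : superdiagSum u⁻¹ + superdiagSum u = 0 := by
    rw [← superdiagSum_mul hu.inv hu, nonsing_inv_mul _ hu.isUnit_det, superdiagSum_one]
  rw [superdiagSum_mul (hu.inv.mul ha) hu, superdiagSum_mul hu.inv ha]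
  linear_combination hinv

lemma superdiagSum_one_add_single {p q : Fin n} (hpq : (q : ℕ) = p + 1) (c : F) :
    superdiagSum (1 + single p q c) = c := by
  have hentry : ∀ i j : Fin n, (if (j : ℕ) = i + 1 then (1 + single p q c) i j else 0) =
      if p = i ∧ q = j then c else 0 := by
    intro i j
    split_ifs with h₁ h₂ h₂ <;> simp_all [single_apply, one_apply, Fin.ext_iff]
  simp only [superdiagSum, hentry]
  simp [ite_and]

end SuperdiagSum

section Bruhat

variable {n : ℕ}

lemma exists_isUniUpper_mulVec_eq_zero_of_ne (v : Fin (n + 1) → F) :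
    ∃ i, ∃ u : Matrix (Fin (n + 1)) (Fin (n + 1)) F,
      IsUniUpper u ∧ ∀ r ≠ i, (u *ᵥ v) r = 0 := by
  classical
  by_cases hv : v = 0
  · exact ⟨0, 1, isUniUpper_one, fun r _ => by simp [hv]⟩
  obtain ⟨i, hi, hmax⟩ := (Finset.univ.filter (v · ≠ 0)).exists_max_image id
    (by simpa [Finset.filter_nonempty_iff, funext_iff] using hv)
  simp only [Finset.mem_filter, Finset.mem_univ, true_and, id] at hi hmax
  have hlow : ∀ r, i < r → v r = 0 := fun r hr => by
    by_contra h
    exact absurd (hmax r h) (not_le.2 hr)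
  -- `i` is the lowest nonzero entry, so clearing the entries above it with row `i` is upper
  -- unitriangular
  set x : Fin (n + 1) → F := fun r => if r < i then v r / v i else 0
  refine ⟨i, 1 - vecMulVec x (Pi.single i 1), ⟨fun r c hcr => ?_, fun r => ?_⟩, fun r hr => ?_⟩
  · by_cases hc : c = i
    · subst hc
      simp [x, vecMulVec_apply, one_apply_ne (Fin.ne_of_gt hcr), lt_asymm (show c < r from hcr)]
    · simp [vecMulVec_apply, one_apply_ne (Fin.ne_of_gt hcr), hc]
  · by_cases hr : r = i
    · subst hr
      simp [x, vecMulVec_apply]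
    · simp [vecMulVec_apply, hr]
  · rcases lt_or_gt_of_ne hr with hr | hr
    · simp [sub_mulVec, vecMulVec_mulVec, x, hr, mul_div_cancel₀ _ hi]
    · simp [sub_mulVec, vecMulVec_mulVec, x, not_lt.2 hr.le, hlow r hr]

-- `u` with the row and the column `i` of the identity matrix inserted
def extendAt (i : Fin (n + 1)) (u : Matrix (Fin n) (Fin n) F) :
    Matrix (Fin (n + 1)) (Fin (n + 1)) F :=
  Matrix.of fun r => Fin.insertNth (α := fun _ => Fin (n + 1) → F) i (Pi.single i 1)
    (fun a => Fin.insertNth (α := fun _ => F) i 0 (u a)) r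

lemma isUniUpper_extendAt (i : Fin (n + 1)) {u : Matrix (Fin n) (Fin n) F} (hu : IsUniUpper u) :
    IsUniUpper (extendAt i u) := by
  constructor
  · intro r c hcr
    induction r using Fin.succAboveCases i with
    | x => simp [extendAt, Fin.ne_of_lt hcr]
    | p a =>
      induction c using Fin.succAboveCases i with
      | x => simp [extendAt]
      | p b => simpa [extendAt] using hu.1 a b (Fin.succAbove_lt_succAbove_iff.1 hcr)
  · intro r
    induction r using Fin.succAboveCases i with
    | x => simp [extendAt]
    | p a => simpa [extendAt] using hu.2 a

lemma extendAt_mul_apply_succAbove (i : Fin (n + 1)) (u : Matrix (Fin n) (Fin n) F)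
    (M : Matrix (Fin (n + 1)) (Fin (n + 1)) F) (a : Fin n) (c : Fin (n + 1)) :
    (extendAt i u * M) (i.succAbove a) c = ∑ b, u a b * M (i.succAbove b) c := by
  simp [mul_apply, Fin.sum_univ_succAbove _ i, extendAt]

theorem exists_isUniUpper_isUpperTriangular_submatrix_mul :
    ∀ {n : ℕ} (M : Matrix (Fin n) (Fin n) F), ∃ (u : Matrix (Fin n) (Fin n) F)
      (σ : Equiv.Perm (Fin n)), IsUniUpper u ∧ ((u * M).submatrix σ id).IsUpperTriangular
  | 0, _ => ⟨1, 1, isUniUpper_one, fun r => r.elim0⟩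
  | n + 1, M => by
    obtain ⟨i, u₀, hu₀, hcol⟩ := exists_isUniUpper_mulVec_eq_zero_of_ne fun r => M r 0
    obtain ⟨u', σ', hu', hT'⟩ :=
      exists_isUniUpper_isUpperTriangular_submatrix_mul ((u₀ * M).submatrix i.succAbove Fin.succ)
    refine ⟨extendAt i u' * u₀,
      (finSuccEquiv n).trans ((Equiv.optionCongr σ').trans (finSuccEquiv' i).symm),
      (isUniUpper_extendAt i hu').mul hu₀, fun r c hcr => ?_⟩
    obtain ⟨r, rfl⟩ := Fin.exists_succ_eq.2 (Fin.ne_zero_of_lt hcr)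
    simp only [submatrix_apply, id, Equiv.trans_apply, finSuccEquiv_succ, Equiv.optionCongr_apply,
      Option.map_some, finSuccEquiv'_symm_some, mul_assoc, extendAt_mul_apply_succAbove]
    induction c using Fin.cases with
    | zero =>
      simp [show ∀ b, (u₀ * M) (i.succAbove b) 0 = 0 from fun b => hcol _ (Fin.succAbove_ne i b)]
    | succ c => exact hT' (Fin.succ_lt_succ_iff.1 hcr)

end Bruhat

section Blocks

variable {ι l o : Type*} [Fintype ι] [DecidableEq ι] [Fintype l] [DecidableEq l] [Fintype o]
  [DecidableEq o]

lemma isUnit_submatrix_id {M : Matrix ι ι F} (hM : IsUnit M) (σ : Equiv.Perm ι) :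
    IsUnit (M.submatrix σ id) := by
  rw [isUnit_iff_isUnit_det, det_permute]
  exact ((Equiv.Perm.sign σ).isUnit.map (Int.castRingHom F)).mul
    ((isUnit_iff_isUnit_det M).1 hM)

lemma inv_submatrix_mul_mul_submatrix (T X : Matrix ι ι F) (e : Equiv.Perm ι) :
    (T.submatrix e id)⁻¹ * X * T.submatrix e id = T⁻¹ * X.submatrix e.symm e.symm * T := by
  calc (T.submatrix e id)⁻¹ * X * T.submatrix e id
      = T⁻¹.submatrix (Equiv.refl ι) e * (X.submatrix e.symm e.symm).submatrix e e *
          T.submatrix e (Equiv.refl ι) := by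
        rw [← inv_submatrix_equiv]
        simp
    _ = T⁻¹ * X.submatrix e.symm e.symm * T := by
        rw [submatrix_mul_equiv, submatrix_mul_equiv]
        simp

lemma exists_inv_fromBlocks_mul_mul_fromBlocks {A : Matrix l l F} {B : Matrix o o F}
    (hA : IsUnit A.det) (hB : IsUnit B.det) (Y X₀ : Matrix l o F) (v : Matrix o o F) :
    ∃ X, (fromBlocks A Y 0 B)⁻¹ * fromBlocks 1 X₀ 0 v * fromBlocks A Y 0 B =
      fromBlocks 1 X 0 (B⁻¹ * v * B) := by
  set X := A⁻¹ * (Y + X₀ * B - Y * (B⁻¹ * v * B))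
  have hP : IsUnit (fromBlocks A Y 0 B).det := by
    rw [det_fromBlocks_zero₂₁]
    exact hA.mul hB
  suffices h : fromBlocks 1 X₀ 0 v * fromBlocks A Y 0 B =
      fromBlocks A Y 0 B * fromBlocks 1 X 0 (B⁻¹ * v * B) by
    exact ⟨X, by rw [mul_assoc, h, nonsing_inv_mul_cancel_left _ _ hP]⟩
  simp only [fromBlocks_multiply, X, mul_nonsing_inv_cancel_left _ _ hA, ← mul_assoc,
    mul_nonsing_inv _ hB]
  simp

end Blocks

section ExtendTopLeft

variable {k : ℕ}

def extendTopLeft (n : ℕ) (v : Matrix (Fin k) (Fin k) F) : Matrix (Fin n) (Fin n) F :=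
  Matrix.of fun i j =>
    if h : (i : ℕ) < k ∧ (j : ℕ) < k then v ⟨i, h.1⟩ ⟨j, h.2⟩
    else (1 : Matrix (Fin n) (Fin n) F) i j

lemma isUniUpper_extendTopLeft (n : ℕ) {v : Matrix (Fin k) (Fin k) F} (hv : IsUniUpper v) :
    IsUniUpper (extendTopLeft n v) := by
  refine ⟨fun i j hij => ?_, fun i => ?_⟩ <;> simp only [extendTopLeft, of_apply] <;> split_ifs
  · exact hv.1 _ _ hij
  · exact one_apply_ne (Fin.ne_of_gt hij)
  · exact hv.2 _
  · exact one_apply_eq i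

lemma superdiagSum_extendTopLeft {n : ℕ} (hkn : k ≤ n) (v : Matrix (Fin k) (Fin k) F) :
    superdiagSum (extendTopLeft n v) = superdiagSum v := by
  have hout : ∀ i j : Fin n, ¬ ((i : ℕ) < k ∧ (j : ℕ) < k) →
      (if (j : ℕ) = i + 1 then extendTopLeft n v i j else 0) = 0 := by
    intro i j hij
    split_ifs with h
    · rw [extendTopLeft, of_apply, dif_neg hij, one_apply_ne (by rintro rfl; omega)]
    · rfl
  have hrange : ∀ i : Fin n, i ∉ Set.range (Fin.castLE hkn) → k ≤ (i : ℕ) :=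
    fun i hi => not_lt.1 fun h => hi ⟨⟨i, h⟩, rfl⟩
  unfold superdiagSum
  symm
  refine Fintype.sum_of_injective _ (Fin.castLE_injective hkn) _ _
    (fun i hi => Finset.sum_eq_zero fun j _ => hout i j (by have := hrange i hi; omega))
    (fun a => ?_)
  refine Fintype.sum_of_injective _ (Fin.castLE_injective hkn) _ _
    (fun j hj => hout _ j (by have := hrange j hj; omega)) (fun b => ?_)
  simp [extendTopLeft, a.isLt, b.isLt]

end ExtendTopLeft

lemma val_lt_card_of_pred_mem {n : ℕ} {s : Finset (Fin n)}
    (hs : ∀ i j : Fin n, (j : ℕ) = i + 1 → j ∈ s → i ∈ s) {j : Fin n} (hj : j ∈ s) :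
    (j : ℕ) < s.card := by
  have hdown : ∀ d (i : Fin n), (j : ℕ) = i + d → i ∈ s := by
    intro d
    induction d with
    | zero => intro i hi; rwa [show i = j from Fin.ext hi.symm]
    | succ d ih =>
      intro i hi
      exact hs i ⟨i + 1, by omega⟩ rfl (ih _ (by simp only; omega))
  have hIic : Finset.Iic j ⊆ s := fun i hi =>
    hdown (j - i) i (by have := Finset.mem_Iic.1 hi; rw [Fin.le_def] at this; omega)
  simpa [Fin.card_Iic] using Finset.card_le_card hIic

section BlockPositions

variable {m k : ℕ}

lemma exists_perm_of_not_adjacent {τ : Fin m ⊕ Fin k ≃ Fin (m + k)}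
    (hτ : ∀ a b, (τ (.inr b) : ℕ) ≠ τ (.inl a) + 1) :
    ∃ β : Equiv.Perm (Fin k), ∀ b, (τ (.inr b) : ℕ) = β b := by
  classical
  set s := Finset.univ.image (τ ∘ Sum.inr)
  have hcard : s.card = k := by
    rw [Finset.card_image_of_injective _ (τ.injective.comp Sum.inr_injective), Finset.card_fin]
  have hs : ∀ i j : Fin (m + k), (j : ℕ) = i + 1 → j ∈ s → i ∈ s := by
    intro i j hij hj
    obtain ⟨b, -, rfl⟩ := Finset.mem_image.1 hj
    obtain ⟨x, rfl⟩ := τ.surjective i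
    rcases x with a | b'
    · exact absurd hij (hτ a b)
    · exact Finset.mem_image_of_mem _ (Finset.mem_univ b')
  have hlt : ∀ b, (τ (.inr b) : ℕ) < k := fun b => by
    simpa [hcard] using val_lt_card_of_pred_mem hs (Finset.mem_image_of_mem (τ ∘ Sum.inr)
      (Finset.mem_univ b))
  have hinj : Function.Injective fun b => (⟨τ (.inr b), hlt b⟩ : Fin k) := fun b b' h =>
    Sum.inr_injective (τ.injective (Fin.ext (Fin.mk.inj_iff.1 h)))
  exact ⟨Equiv.ofBijective _ (Finite.injective_iff_bijective.1 hinj), fun _ => rfl⟩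

lemma extendTopLeft_submatrix_eq_fromBlocks {τ : Fin m ⊕ Fin k ≃ Fin (m + k)}
    {β : Equiv.Perm (Fin k)} (hβ : ∀ b, (τ (.inr b) : ℕ) = β b) (v : Matrix (Fin k) (Fin k) F) :
    (extendTopLeft (m + k) v).submatrix τ τ = fromBlocks 1 0 0 (v.submatrix β β) := by
  have hge : ∀ a, ¬ (τ (.inl a) : ℕ) < k := fun a h => by
    have := hβ (β.symm ⟨_, h⟩)
    rw [Equiv.apply_symm_apply] at this
    exact Sum.inl_ne_inr (τ.injective (Fin.ext this.symm))
  ext (a | b) (a' | b')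
  · simp [extendTopLeft, hge, one_apply]
  · simp [extendTopLeft, hge]
  · simp [extendTopLeft, hge]
  · simp [extendTopLeft, hβ]

lemma exists_submatrix_finSumFinEquiv_eq_fromBlocks
    {T : Matrix (Fin (m + k)) (Fin (m + k)) F} (hT : T.IsUpperTriangular) (hdet : IsUnit T) :
    ∃ A Y B, IsUnit A.det ∧ IsUnit B.det ∧
      T.submatrix finSumFinEquiv finSumFinEquiv = fromBlocks A Y 0 B := by
  set T' := T.submatrix finSumFinEquiv finSumFinEquiv
  have h21 : T'.toBlocks₂₁ = 0 := by
    ext a b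
    exact hT (by simp [Fin.lt_def]; omega)
  have hT' : T' = fromBlocks T'.toBlocks₁₁ T'.toBlocks₁₂ 0 T'.toBlocks₂₂ := by
    rw [← h21, fromBlocks_toBlocks]
  have hdet' : IsUnit (T'.toBlocks₁₁.det * T'.toBlocks₂₂.det) := by
    rwa [← det_fromBlocks_zero₂₁, ← hT', det_submatrix_equiv_self, ← isUnit_iff_isUnit_det]
  exact ⟨_, _, _, isUnit_of_mul_isUnit_left hdet', isUnit_of_mul_isUnit_right hdet', hT'⟩

lemma exists_inv_submatrix_mul_mul_submatrix_eq_reindex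
    {T : Matrix (Fin (m + k)) (Fin (m + k)) F} {A : Matrix (Fin m) (Fin m) F}
    {Y : Matrix (Fin m) (Fin k) F} {B : Matrix (Fin k) (Fin k) F}
    (hblocks : T.submatrix finSumFinEquiv finSumFinEquiv = fromBlocks A Y 0 B)
    (hA : IsUnit A.det) (hB : IsUnit B.det) {σ : Equiv.Perm (Fin (m + k))}
    {u : Matrix (Fin (m + k)) (Fin (m + k)) F} {X₀ : Matrix (Fin m) (Fin k) F}
    {w : Matrix (Fin k) (Fin k) F}
    (hu : u.submatrix (finSumFinEquiv.trans σ) (finSumFinEquiv.trans σ) = fromBlocks 1 X₀ 0 w) :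
    ∃ X, (T.submatrix σ.symm id)⁻¹ * u * T.submatrix σ.symm id =
      reindex finSumFinEquiv finSumFinEquiv (fromBlocks 1 X 0 (B⁻¹ * w * B)) := by
  obtain ⟨X, hX⟩ := exists_inv_fromBlocks_mul_mul_fromBlocks hA hB Y X₀ w
  refine ⟨X, ?_⟩
  rw [inv_submatrix_mul_mul_submatrix, Equiv.symm_symm, ← hX, ← hblocks, ← hu,
    inv_submatrix_equiv, Equiv.coe_trans, ← submatrix_submatrix, submatrix_mul_equiv,
    submatrix_mul_equiv]
  simp [reindex_apply]

lemma exists_whittakerWitness_of_isUpperTriangular_submatrix {ψ₀ : F → ℂˣ} (hψ : ∃ x, ψ₀ x ≠ 1)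
    {H : Subgroup (GL (Fin k) F)} (hH : DisjointFromWhittaker ψ₀ (H : Set (GL (Fin k) F)))
    {N : Matrix (Fin (m + k)) (Fin (m + k)) F} (hN : IsUnit N) {σ : Equiv.Perm (Fin (m + k))}
    (hT : (N.submatrix σ id).IsUpperTriangular) :
    ∃ u, IsUniUpper u ∧ psiN ψ₀ u ≠ 1 ∧ ∃ h ∈ H, ∃ X,
      N⁻¹ * u * N = reindex finSumFinEquiv finSumFinEquiv (fromBlocks 1 X 0 h.val) := by
  obtain ⟨A, Y, B, hA, hB, hblocks⟩ :=
    exists_submatrix_finSumFinEquiv_eq_fromBlocks hT (isUnit_submatrix_id hN σ)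
  have hNT : N = (N.submatrix σ id).submatrix σ.symm id := by simp
  rw [hNT]
  set τ : Fin m ⊕ Fin k ≃ Fin (m + k) := finSumFinEquiv.trans σ
  by_cases hadj : ∃ a b, (τ (.inr b) : ℕ) = τ (.inl a) + 1
  · obtain ⟨a, b, hab⟩ := hadj
    obtain ⟨c, hc⟩ := hψ
    have hu : (1 + single (τ (.inl a)) (τ (.inr b)) c).submatrix τ τ =
        fromBlocks 1 (single a b c) 0 1 := by
      ext (a' | b') (a'' | b'') <;> simp [single_apply, one_apply]
    obtain ⟨X, hX⟩ := exists_inv_submatrix_mul_mul_submatrix_eq_reindex hblocks hA hB hu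
    refine ⟨_, isUniUpper_one_add_single (show τ (.inl a) < τ (.inr b) by omega) c, ?_,
      1, H.one_mem, X, ?_⟩
    · rwa [psiN_eq_superdiagSum, superdiagSum_one_add_single hab]
    · simpa [nonsing_inv_mul _ hB] using hX
  · obtain ⟨β, hβ⟩ := exists_perm_of_not_adjacent fun a b hab => hadj ⟨a, b, hab⟩
    obtain ⟨v, hv, hvH, hψv⟩ :=
      hH (isUnit_submatrix_id ((isUnit_iff_isUnit_det B).2 hB) β.symm).unit
    obtain ⟨X, hX⟩ := exists_inv_submatrix_mul_mul_submatrix_eq_reindex hblocks hA hB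
      (extendTopLeft_submatrix_eq_fromBlocks hβ v.val)
    refine ⟨_, isUniUpper_extendTopLeft _ hv, ?_, _, hvH, X, ?_⟩
    · rwa [psiN_eq_superdiagSum, superdiagSum_extendTopLeft (by omega)]
    · simpa [inv_submatrix_mul_mul_submatrix] using hX

end BlockPositions

theorem stmt0 (ψ₀ : F → ℂˣ) (hψnontriv : ∃ x : F, ψ₀ x ≠ 1) (m k : ℕ)
    (H : Subgroup (GL (Fin k) F))
    (hH : DisjointFromWhittaker ψ₀ (H : Set (GL (Fin k) F))) :
    DisjointFromWhittaker ψ₀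
      { g : GL (Fin (m + k)) F | ∃ h : GL (Fin k) F, h ∈ H ∧ ∃ X : Matrix (Fin m) (Fin k) F,
          g.val = Matrix.reindex finSumFinEquiv finSumFinEquiv
            (Matrix.fromBlocks 1 X 0 h.val) } := by
  intro g
  obtain ⟨u₀, σ, hu₀, hT⟩ := exists_isUniUpper_isUpperTriangular_submatrix_mul g.val
  obtain ⟨u, hu, hψu, h, hh, X, hX⟩ := exists_whittakerWitness_of_isUpperTriangular_submatrix
    hψnontriv hH (hu₀.isUnit.mul g.isUnit) hT
  refine ⟨hu₀.isUnit.unit⁻¹ * hu.isUnit.unit * hu₀.isUnit.unit, ?_, ⟨h, hh, X, ?_⟩, ?_⟩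
  · simpa using (hu₀.inv.mul hu).mul hu₀
  · rw [← hX]
    simp [Matrix.mul_inv_rev, mul_assoc]
  · simpa [psiN_eq_superdiagSum, superdiagSum_inv_mul_mul hu₀ hu] using hψu

end Stmt0
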